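/- Let ρ > 1, Q > 0, ε ≥ 0, and let integers M ≤ N be given with N ≥ 1. Let f : [-1,1] → ℝ be given by a uniformly convergent Chebyshev series f(x) = Σ_{n≥0} a_n T_n(x) with |a_0| ≤ Q and |a_n| ≤ 2Q ρ^{-n} for n ≥ 1. Let ε_vec ∈ ℝ^{N+1} satisfy ‖ε_vec‖_∞ ≤ ε, let c ∈ ℝ^{M+1} solve the normal equations T_M(x^{equi})ᵀ T_M(x^{equi}) c = T_M(x^{equi})ᵀ (f(x^{equi}) + ε_vec), and set p_M(x) = Σ_{k=0}^M c_k T_k(x). Then sup_{x ∈ [-1,1]} |f(x) − p_M(x)| ≤ 2Q [ 1 + (M+1)(N+1)^{1/2} / σ_{M+1}(T_M(x^{equi})) ] · ρ^{-M}/(ρ−1) + (M+1)(N+1)^{1/2} ε / σ_{M+1}(T_M(x^{equi})). -/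

import Mathlib

open Matrix MeasureTheory
open scoped BigOperators

/-- Chebyshev polynomial of the first kind `T_n`, as a function `ℝ → ℝ`. -/
noncomputable def cheb (n : ℕ) (x : ℝ) : ℝ :=
  (Polynomial.Chebyshev.T ℝ (n : ℤ)).eval x

/-- The equally spaced grid `x_k = 2k/N - 1`, `k = 0, …, N`, on `[-1,1]`. -/
noncomputable def xequi (N : ℕ) (k : Fin (N + 1)) : ℝ :=
  2 * (k : ℝ) / (N : ℝ) - 1

/-- The `(N+1) × (M+1)` Chebyshev–Vandermonde matrix at the equally spaced grid. -/
noncomputable def chebVand (N M : ℕ) : Matrix (Fin (N + 1)) (Fin (M + 1)) ℝ :=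
  Matrix.of fun i j => cheb (j : ℕ) (xequi N i)

/-- The Euclidean norm of a vector in `ℝ^n`. -/
noncomputable def enorm2 {n : ℕ} (v : Fin n → ℝ) : ℝ :=
  Real.sqrt (∑ i, (v i) ^ 2)

/-- The smallest singular value of a matrix, as the infimum of `‖A v‖₂` over unit vectors. -/
noncomputable def sigmaMin {m n : ℕ} (A : Matrix (Fin m) (Fin n) ℝ) : ℝ :=
  sInf {r | ∃ v : Fin n → ℝ, enorm2 v = 1 ∧ r = enorm2 (A.mulVec v)}

/-- The largest singular value of a matrix, as the supremum of `‖A v‖₂` over unit vectors. -/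
noncomputable def sigmaMax {m n : ℕ} (A : Matrix (Fin m) (Fin n) ℝ) : ℝ :=
  sSup {r | ∃ v : Fin n → ℝ, enorm2 v = 1 ∧ r = enorm2 (A.mulVec v)}

/-! Write `A = T_M(x^equi)`, `y` for the perturbed samples and `b = (a_0, …, a_M)` for the
truncated Chebyshev coefficients. Geometric decay of the `a_n` and `|T_n| ≤ 1` on `[-1,1]` bound
the truncation error by `t = 2Qρ^{-M}/(ρ-1)`, so every entry of the residual `y - A b` is at most
`t + ε`. The normal equations make `A (c - b)` the orthogonal projection of `y - A b` onto the
range of `A`, whence `σ_min ‖c - b‖₂ ≤ ‖A (c - b)‖₂ ≤ ‖y - A b‖₂ ≤ √(N+1) (t + ε)`, and on `[-1,1]`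
the polynomial `Σ (c_k - b_k) T_k` is bounded by `(M+1) ‖c - b‖₂`. Finally `σ_min > 0`: a
polynomial of degree `≤ M` vanishing at the `N + 1 > M` distinct nodes is zero, and the `T_k` are
linearly independent. -/
theorem xequi_mem_Icc (N : ℕ) (i : Fin (N + 1)) : xequi N i ∈ Set.Icc (-1 : ℝ) 1 := by
  have hi : (i : ℝ) ≤ N := by exact_mod_cast Nat.lt_succ_iff.mp i.isLt
  have hle : 2 * (i : ℝ) / N ≤ 2 :=
    div_le_of_le_mul₀ (Nat.cast_nonneg _) zero_le_two (by linarith)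
  refine ⟨?_, ?_⟩ <;> simp only [xequi]
  · linarith [show 0 ≤ 2 * (i : ℝ) / N by positivity]
  · linarith

theorem xequi_injective {N : ℕ} (hN : N ≠ 0) : Function.Injective (xequi N) := by
  intro i j h
  have hN' : (N : ℝ) ≠ 0 := Nat.cast_ne_zero.mpr hN
  rw [xequi, xequi, sub_left_inj, div_left_inj' hN', mul_right_inj' two_ne_zero] at h
  exact Fin.ext (by exact_mod_cast h)

section Chebyshev

open Polynomial Polynomial.Chebyshev

theorem abs_cheb_le_one (n : ℕ) {x : ℝ} (hx : x ∈ Set.Icc (-1 : ℝ) 1) : |cheb n x| ≤ 1 :=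
  abs_eval_T_real_le_one n (abs_le.mpr hx)

theorem chebVand_mulVec_apply {N M : ℕ} (v : Fin (M + 1) → ℝ) (i : Fin (N + 1)) :
    (chebVand N M *ᵥ v) i = ∑ k, v k * cheb k (xequi N i) := by
  simp [chebVand, Matrix.mulVec, dotProduct, mul_comm]

theorem chebVand_mulVec_injective {N M : ℕ} (hMN : M ≤ N) (hN : N ≠ 0) :
    Function.Injective (chebVand N M).mulVec := by
  suffices ∀ v, chebVand N M *ᵥ v = 0 → v = 0 from
    fun v w h => sub_eq_zero.mp (this _ (by rw [Matrix.mulVec_sub, h, sub_self]))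
  intro v hv
  set p : ℝ[X] := ∑ j : Fin (M + 1), v j • T ℝ (j : ℕ)
  have hroots : ∀ i, p.eval (xequi N i) = 0 := fun i => by
    simpa [p, eval_finsetSum, chebVand_mulVec_apply, cheb] using congrFun hv i
  have hdeg : p.natDegree ≤ M := natDegree_sum_le_of_forall_le _ _ fun j _ =>
    (natDegree_smul_le _ _).trans (by simp [natDegree_T]; omega)
  have hp : p = 0 := eq_zero_of_natDegree_lt_card_of_eval_eq_zero p (xequi_injective hN) hroots
    (by simp; omega)
  exact funext (Fintype.linearIndependent_iff.mp
    ((chebyshevTsequence ℝ).linearIndependent.comp _ Fin.val_injective) v hp)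

end Chebyshev

section Norms

variable {n : ℕ}

theorem enorm2_eq_norm (v : Fin n → ℝ) : enorm2 v = ‖WithLp.toLp 2 v‖ := by
  simp [enorm2, EuclideanSpace.norm_eq, Real.norm_eq_abs, sq_abs]

theorem enorm2_smul (t : ℝ) (v : Fin n → ℝ) : enorm2 (t • v) = |t| * enorm2 v := by
  simp [enorm2_eq_norm, WithLp.toLp_smul, norm_smul]

theorem abs_le_enorm2 (v : Fin n → ℝ) (i : Fin n) : |v i| ≤ enorm2 v := by
  rw [enorm2_eq_norm]
  exact PiLp.norm_apply_le (WithLp.toLp 2 v) i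

theorem enorm2_le_sqrt_card_mul {v : Fin n → ℝ} {C : ℝ} (hC : 0 ≤ C) (hv : ∀ i, |v i| ≤ C) :
    enorm2 v ≤ √n * C :=
  calc enorm2 v ≤ √(∑ _i : Fin n, C ^ 2) := Real.sqrt_le_sqrt <| Finset.sum_le_sum fun i _ =>
        sq_le_sq' (abs_le.mp (hv i)).1 (abs_le.mp (hv i)).2
    _ = √n * C := by simp [Real.sqrt_mul, Real.sqrt_sq hC]

end Norms

section SingularValue

variable {m n : ℕ} (A : Matrix (Fin m) (Fin n) ℝ)

theorem sigmaMin_le_enorm2_mulVec {v : Fin n → ℝ} (hv : enorm2 v = 1) :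
    sigmaMin A ≤ enorm2 (A *ᵥ v) :=
  csInf_le ⟨0, by rintro _ ⟨w, -, rfl⟩; exact Real.sqrt_nonneg _⟩ ⟨v, hv, rfl⟩

theorem sigmaMin_mul_enorm2_le (v : Fin n → ℝ) : sigmaMin A * enorm2 v ≤ enorm2 (A *ᵥ v) := by
  rcases eq_or_ne v 0 with rfl | hv
  · simp [enorm2]
  have hpos : 0 < enorm2 v := by simpa [enorm2_eq_norm] using hv
  have h := sigmaMin_le_enorm2_mulVec A (v := (enorm2 v)⁻¹ • v)
    (by rw [enorm2_smul, abs_inv, abs_of_pos hpos, inv_mul_cancel₀ hpos.ne'])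
  rw [Matrix.mulVec_smul, enorm2_smul, abs_inv, abs_of_pos hpos, le_inv_mul_iff₀ hpos] at h
  linarith

theorem le_sigmaMin [NeZero n] {c : ℝ} (h : ∀ v, c * enorm2 v ≤ enorm2 (A *ᵥ v)) :
    c ≤ sigmaMin A :=
  le_csInf ⟨_, Pi.single 0 1, by simp [enorm2_eq_norm], rfl⟩
    (by rintro _ ⟨v, hv, rfl⟩; simpa [hv] using h v)

theorem sigmaMin_pos [NeZero n] (hA : Function.Injective A.mulVec) : 0 < sigmaMin A := by
  have hL : Function.Injective (Matrix.toLpLin 2 2 A) := fun x y h =>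
    WithLp.ofLp_injective 2 (hA (congrArg WithLp.ofLp h))
  obtain ⟨K, -, hK⟩ := (Matrix.toLpLin 2 2 A).injective_iff_antilipschitz.mp hL
  obtain ⟨c, hc, hbound⟩ := antilipschitzWith_iff_exists_mul_le_norm.mp ⟨K, hK⟩
  exact hc.trans_le <| le_sigmaMin A fun v => by
    simpa [enorm2_eq_norm] using hbound (WithLp.toLp 2 v)

theorem enorm2_mulVec_le_of_normal_eq {d : Fin n → ℝ} {r : Fin m → ℝ}
    (h : (Aᵀ * A) *ᵥ d = Aᵀ *ᵥ r) : enorm2 (A *ᵥ d) ≤ enorm2 r := by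
  have horth : (A *ᵥ d) ⬝ᵥ (A *ᵥ d) = (A *ᵥ d) ⬝ᵥ r :=
    calc (A *ᵥ d) ⬝ᵥ (A *ᵥ d) = d ⬝ᵥ (Aᵀ * A) *ᵥ d := by
          rw [← Matrix.mulVec_mulVec, dotProduct_mulVec d Aᵀ, vecMul_transpose]
      _ = (A *ᵥ d) ⬝ᵥ r := by rw [h, dotProduct_mulVec, vecMul_transpose]
  set u := WithLp.toLp 2 (A *ᵥ d)
  have hsq : ‖u‖ * ‖u‖ ≤ ‖WithLp.toLp 2 r‖ * ‖u‖ := by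
    rw [← real_inner_self_eq_norm_mul_norm]
    convert real_inner_le_norm (WithLp.toLp 2 r) u using 1
    simp only [u, EuclideanSpace.inner_toLp_toLp, star_trivial]
    exact horth
  rw [enorm2_eq_norm, enorm2_eq_norm]
  rcases (norm_nonneg u).eq_or_lt with h0 | hpos
  · exact h0 ▸ norm_nonneg _
  · exact le_of_mul_le_mul_right hsq hpos

theorem sigmaMin_mul_enorm2_sub_le {c : Fin n → ℝ} {y : Fin m → ℝ}
    (hc : (Aᵀ * A) *ᵥ c = Aᵀ *ᵥ y) (b : Fin n → ℝ) :
    sigmaMin A * enorm2 (c - b) ≤ enorm2 (y - A *ᵥ b) :=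
  (sigmaMin_mul_enorm2_le A _).trans <| enorm2_mulVec_le_of_normal_eq A <| by
    rw [Matrix.mulVec_sub, Matrix.mulVec_sub, hc, ← Matrix.mulVec_mulVec]

end SingularValue

theorem abs_sum_mul_cheb_le {n : ℕ} (v : Fin n → ℝ) {x : ℝ} (hx : x ∈ Set.Icc (-1 : ℝ) 1) :
    |∑ k, v k * cheb k x| ≤ n * enorm2 v :=
  calc |∑ k, v k * cheb k x| ≤ ∑ k, |v k * cheb k x| := Finset.abs_sum_le_sum_abs _ _
    _ ≤ ∑ _k : Fin n, enorm2 v := Finset.sum_le_sum fun k _ => by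
        rw [abs_mul]
        exact (mul_le_of_le_one_right (abs_nonneg _) (abs_cheb_le_one k hx)).trans
          (abs_le_enorm2 v k)
    _ = n * enorm2 v := by simp

theorem abs_sub_sum_cheb_le {ρ Q : ℝ} (hρ : 1 < ρ) (hQ : 0 ≤ Q) {a : ℕ → ℝ} (ha0 : |a 0| ≤ Q)
    (ha : ∀ n : ℕ, 1 ≤ n → |a n| ≤ 2 * Q * ρ ^ (-(n : ℤ))) {x s : ℝ}
    (hx : x ∈ Set.Icc (-1 : ℝ) 1) (hs : HasSum (fun n => a n * cheb n x) s) (M : ℕ) :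
    |s - ∑ k : Fin (M + 1), a k * cheb k x| ≤ 2 * Q * (ρ ^ (-(M : ℤ)) / (ρ - 1)) := by
  have hterm : ∀ n, |a n * cheb n x| ≤ 2 * Q * ρ⁻¹ ^ n := by
    intro n
    rw [abs_mul, inv_pow, ← zpow_natCast, ← _root_.zpow_neg]
    refine (mul_le_of_le_one_right (abs_nonneg _) (abs_cheb_le_one n hx)).trans ?_
    rcases n.eq_zero_or_pos with rfl | hn
    · simp only [CharP.cast_eq_zero, neg_zero, zpow_zero, mul_one]
      linarith
    · exact ha n hn
  have h := dist_le_of_le_geometric_of_tendsto ρ⁻¹ (2 * Q) (inv_lt_one_of_one_lt₀ hρ)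
    (fun n => by simpa [dist_eq_norm, Finset.sum_range_succ] using hterm n) hs.tendsto_sum_nat
    (M + 1)
  rw [Fin.sum_univ_eq_sum_range (fun k => a k * cheb k x), abs_sub_comm, ← Real.dist_eq]
  convert h using 1
  have hρ0 : ρ ≠ 0 := by positivity
  have hρ1 : ρ - 1 ≠ 0 := sub_ne_zero.mpr hρ.ne'
  rw [_root_.zpow_neg, zpow_natCast, inv_pow]
  field_simp
  ring

/-- **Corollary 5.3 of the paper**: least squares fitting with deterministic
perturbations of size at most `ε` satisfies
`sup_{x∈[-1,1]} |f(x) − p_M(x)| ≤ 2Q [1 + (M+1)√(N+1)/σ_{M+1}] ρ^{-M}/(ρ−1)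
+ (M+1)√(N+1) ε / σ_{M+1}`, where `σ_{M+1} = σ_{M+1}(T_M(x^equi))`. -/
theorem least_squares_deterministic_perturbation (ρ Q ε : ℝ) (hρ : 1 < ρ) (hQ : 0 < Q)
    (hε : 0 ≤ ε) (M N : ℕ) (hMN : M ≤ N) (hN : 1 ≤ N)
    (f : ℝ → ℝ) (a : ℕ → ℝ)
    (hf : ∀ x ∈ Set.Icc (-1 : ℝ) 1, HasSum (fun n : ℕ => a n * cheb n x) (f x))
    (ha0 : |a 0| ≤ Q)
    (ha : ∀ n : ℕ, 1 ≤ n → |a n| ≤ 2 * Q * ρ ^ (-(n : ℤ)))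
    (εvec : Fin (N + 1) → ℝ) (hεvec : ∀ i, |εvec i| ≤ ε)
    (c : Fin (M + 1) → ℝ)
    (hc : ((chebVand N M).transpose * chebVand N M) *ᵥ c =
      (chebVand N M).transpose *ᵥ (fun i => f (xequi N i) + εvec i)) :
    ∀ x ∈ Set.Icc (-1 : ℝ) 1,
      |f x - ∑ k : Fin (M + 1), c k * cheb (k : ℕ) x| ≤
        2 * Q * (1 + ((M : ℝ) + 1) * Real.sqrt ((N : ℝ) + 1) / sigmaMin (chebVand N M)) *
            (ρ ^ (-(M : ℤ)) / (ρ - 1)) +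
          ((M : ℝ) + 1) * Real.sqrt ((N : ℝ) + 1) * ε / sigmaMin (chebVand N M) := by
  intro x hx
  have hσ : 0 < sigmaMin (chebVand N M) :=
    sigmaMin_pos _ (chebVand_mulVec_injective hMN (by omega))
  set t := 2 * Q * (ρ ^ (-(M : ℤ)) / (ρ - 1))
  have ht : 0 ≤ t := by have := sub_pos.2 hρ; positivity
  have htail : ∀ y ∈ Set.Icc (-1 : ℝ) 1, |f y - ∑ k : Fin (M + 1), a k * cheb k y| ≤ t :=
    fun y hy => abs_sub_sum_cheb_le hρ hQ.le ha0 ha hy (hf y hy) M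
  let b : Fin (M + 1) → ℝ := fun k => a k
  have hresidual : enorm2 ((fun i => f (xequi N i) + εvec i) - chebVand N M *ᵥ b) ≤
      √((N : ℝ) + 1) * (t + ε) := by
    refine (enorm2_le_sqrt_card_mul (C := t + ε) (by linarith) fun i => ?_).trans_eq
      (by push_cast; rfl)
    rw [Pi.sub_apply, chebVand_mulVec_apply, add_sub_right_comm]
    exact (abs_add_le _ _).trans (add_le_add (htail _ (xequi_mem_Icc N i)) (hεvec i))
  have hcoef : enorm2 (c - b) ≤ √((N : ℝ) + 1) * (t + ε) / sigmaMin (chebVand N M) := by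
    rw [le_div_iff₀ hσ, mul_comm]
    exact (sigmaMin_mul_enorm2_sub_le _ hc b).trans hresidual
  have hsplit : f x - ∑ k, c k * cheb k x =
      (f x - ∑ k, b k * cheb k x) - ∑ k, (c - b) k * cheb k x := by
    simp only [Pi.sub_apply, sub_mul, Finset.sum_sub_distrib]
    ring
  calc |f x - ∑ k, c k * cheb k x|
      ≤ |f x - ∑ k, b k * cheb k x| + |∑ k, (c - b) k * cheb k x| := hsplit ▸ abs_sub _ _
    _ ≤ t + ((M : ℝ) + 1) * (√((N : ℝ) + 1) * (t + ε) / sigmaMin (chebVand N M)) := by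
        refine add_le_add (htail x hx) ((abs_sum_mul_cheb_le _ hx).trans ?_)
        push_cast
        gcongr
    _ = _ := by ring
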